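/- Let (V, g, J) be a 6-dimensional real inner product space with compatible complex structure J, Ω⁺ a 3-form with Ω⁺(X,Y,Z) = -Ω⁺(X,JY,JZ), and η a 3-form satisfying η(X,Y,Z) = η(JX,JY,Z) + η(JX,Y,JZ) + η(X,JY,JZ). Then for all vectors u,v: Σ_{p,q} η(Ju, e_p, e_q) Ω⁺(Jv, e_p, e_q) = -Σ_{p,q} η(u, e_p, e_q) Ω⁺(v, e_p, e_q), where {e_p} is an orthonormal basis. -/

import Mathlib

open RealInnerProductSpace

set_option linter.unusedSectionVars false

variable {V : Type} [NormedAddCommGroup V] [InnerProductSpace ℝ V]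

theorem slot1_update (a x z w : V) : Function.update ![a, x, z] 1 w = ![a, w, z] := by
  funext i; fin_cases i <;> simp [Function.update]

theorem slot2_update (a x z w : V) : Function.update ![a, x, z] 2 w = ![a, x, w] := by
  funext i; fin_cases i <;> simp [Function.update]

theorem slot0_update (a x z w : V) : Function.update ![a, x, z] 0 w = ![w, x, z] := by
  funext i; fin_cases i <;> simp [Function.update]

/-- Curried bilinear map from a 3-form with first argument fixed. -/
def bil (f : AlternatingMap ℝ V ℝ (Fin 3)) (a : V) : V →ₗ[ℝ] V →ₗ[ℝ] ℝ :=
  LinearMap.mk₂ ℝ (fun x y => f ![a, x, y])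
    (fun x x' y => show f ![a, x + x', y] = f ![a, x, y] + f ![a, x', y] by
      rw [← slot1_update a x y (x + x'), f.map_update_add, slot1_update, slot1_update])
    (fun c x y => show f ![a, c • x, y] = c • f ![a, x, y] by
      rw [← slot1_update a x y (c • x), f.map_update_smul, slot1_update])
    (fun x y y' => show f ![a, x, y + y'] = f ![a, x, y] + f ![a, x, y'] by
      rw [← slot2_update a x y (y + y'), f.map_update_add, slot2_update, slot2_update])
    (fun c x y => show f ![a, x, c • y] = c • f ![a, x, y] by
      rw [← slot2_update a x y (c • y), f.map_update_smul, slot2_update])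

@[simp] theorem bil_apply (f : AlternatingMap ℝ V ℝ (Fin 3)) (a x y : V) :
    bil f a x y = f ![a, x, y] := rfl

theorem neg0 (f : AlternatingMap ℝ V ℝ (Fin 3)) (x y z : V) :
    f ![-x, y, z] = -f ![x, y, z] := by
  have := f.map_update_smul ![x, y, z] 0 (-1 : ℝ) x
  rw [slot0_update, slot0_update] at this
  simpa using this

theorem neg1 (f : AlternatingMap ℝ V ℝ (Fin 3)) (x y z : V) :
    f ![x, -y, z] = -f ![x, y, z] := by
  have := f.map_update_smul ![x, y, z] 1 (-1 : ℝ) y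
  rw [slot1_update, slot1_update] at this
  simpa using this

/-- Trace-type sums of products of two linear functionals over an orthonormal
basis do not depend on the basis. -/
theorem sum_eq (c d : OrthonormalBasis (Fin 6) ℝ V) (φ ψ : V →ₗ[ℝ] ℝ) :
    ∑ p : Fin 6, φ (c p) * ψ (c p) = ∑ p : Fin 6, φ (d p) * ψ (d p) := by
  have key : ∀ e : OrthonormalBasis (Fin 6) ℝ V,
      ∑ p : Fin 6, φ (e p) * ψ (e p) = ψ (∑ p : Fin 6, φ (e p) • e p) := by
    intro e; rw [map_sum]; simp [mul_comm]
  have vec : ∀ e : OrthonormalBasis (Fin 6) ℝ V, ∀ y : V,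
      ⟪∑ p : Fin 6, φ (e p) • e p, y⟫ = φ y := by
    intro e y
    rw [sum_inner]
    simp only [real_inner_smul_left]
    have : φ y = φ (∑ p : Fin 6, ⟪e p, y⟫ • e p) := by rw [e.sum_repr' y]
    rw [this, map_sum]
    simp [mul_comm]
  have hv : (∑ p : Fin 6, φ (c p) • c p) = ∑ p : Fin 6, φ (d p) • d p := by
    apply ext_inner_right ℝ
    intro y; rw [vec c y, vec d y]
  rw [key c, key d, hv]

theorem dsum (c d : OrthonormalBasis (Fin 6) ℝ V) (M N : V →ₗ[ℝ] V →ₗ[ℝ] ℝ) :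
    ∑ p : Fin 6, ∑ q : Fin 6, M (c p) (c q) * N (c p) (c q)
      = ∑ p : Fin 6, ∑ q : Fin 6, M (d p) (d q) * N (d p) (d q) := by
  have step1 : ∀ p, ∑ q : Fin 6, M (c p) (c q) * N (c p) (c q)
      = ∑ q : Fin 6, M (c p) (d q) * N (c p) (d q) := fun p => sum_eq c d (M (c p)) (N (c p))
  have step2 : ∀ q, ∑ p : Fin 6, M (c p) (d q) * N (c p) (d q)
      = ∑ p : Fin 6, M (d p) (d q) * N (d p) (d q) := fun q => by
    have := sum_eq c d (M.flip (d q)) (N.flip (d q))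
    simpa using this
  calc ∑ p : Fin 6, ∑ q : Fin 6, M (c p) (c q) * N (c p) (c q)
      = ∑ p : Fin 6, ∑ q : Fin 6, M (c p) (d q) * N (c p) (d q) :=
        Finset.sum_congr rfl fun p _ => step1 p
    _ = ∑ q : Fin 6, ∑ p : Fin 6, M (c p) (d q) * N (c p) (d q) := Finset.sum_comm
    _ = ∑ q : Fin 6, ∑ p : Fin 6, M (d p) (d q) * N (d p) (d q) :=
        Finset.sum_congr rfl fun q _ => step2 q
    _ = ∑ p : Fin 6, ∑ q : Fin 6, M (d p) (d q) * N (d p) (d q) := Finset.sum_comm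

theorem swap12 (f : AlternatingMap ℝ V ℝ (Fin 3)) (x y z : V) :
    f ![y, x, z] = -f ![x, y, z] := by
  have h : ![x, y, z] ∘ Equiv.swap (0 : Fin 3) 1 = ![y, x, z] := by
    funext i; fin_cases i <;> simp [Equiv.swap_apply_def]
  rw [← h, f.map_swap _ (by decide)]

theorem swap23 (f : AlternatingMap ℝ V ℝ (Fin 3)) (x y z : V) :
    f ![x, z, y] = -f ![x, y, z] := by
  have h : ![x, y, z] ∘ Equiv.swap (1 : Fin 3) 2 = ![x, z, y] := by
    funext i; fin_cases i <;> simp [Equiv.swap_apply_def]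
  rw [← h, f.map_swap _ (by decide)]

section Aux end Aux

/-- On a 6-dimensional real inner product space with compatible complex
structure `J`, with `Ω⁺` a 3-form satisfying `Ω⁺(X,Y,Z) = -Ω⁺(X,JY,JZ)` and `η` a
3-form satisfying `η(X,Y,Z) = η(JX,JY,Z) + η(JX,Y,JZ) + η(X,JY,JZ)`, for all `u, v`:
`Σ_{p,q} η(Ju,e_p,e_q) Ω⁺(Jv,e_p,e_q) = -Σ_{p,q} η(u,e_p,e_q) Ω⁺(v,e_p,e_q)`. -/
theorem stmt10 {V : Type} [NormedAddCommGroup V] [InnerProductSpace ℝ V]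
    (b : OrthonormalBasis (Fin 6) ℝ V)
    (J : V →ₗ[ℝ] V)
    (hJ2 : ∀ x : V, J (J x) = -x)
    (hJg : ∀ x y : V, ⟪J x, J y⟫ = ⟪x, y⟫)
    (Ω : AlternatingMap ℝ V ℝ (Fin 3))
    (hΩ : ∀ x y z : V, Ω ![x, y, z] = -Ω ![x, J y, J z])
    (η : AlternatingMap ℝ V ℝ (Fin 3))
    (hη : ∀ x y z : V,
      η ![x, y, z] = η ![J x, J y, z] + η ![J x, y, J z] + η ![x, J y, J z]) :
    ∀ u v : V,
      ∑ p : Fin 6, ∑ q : Fin 6, η ![J u, b p, b q] * Ω ![J v, b p, b q]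
      = -∑ p : Fin 6, ∑ q : Fin 6, η ![u, b p, b q] * Ω ![v, b p, b q] := by
  intro u v
  -- J as a linear isometry equivalence, and the rotated orthonormal basis
  have hJinv : ∀ x : V, J (-J x) = x := fun x => by rw [map_neg, hJ2, neg_neg]
  let eJ : V ≃ₗ[ℝ] V := LinearEquiv.ofLinear J (-J)
    (by ext x; simp [map_neg, hJ2]) (by ext x; simp [map_neg, hJ2])
  let e : V ≃ₗᵢ[ℝ] V := eJ.isometryOfInner (fun x y => hJg x y)
  let b' : OrthonormalBasis (Fin 6) ℝ V := b.map e
  have hb' : ∀ p, b' p = J (b p) := fun p => by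
    simp [b', OrthonormalBasis.map_apply, e, eJ]
    rfl
  -- Step 1: rotate both basis slots
  have h1 : ∑ p : Fin 6, ∑ q : Fin 6, η ![J u, b p, b q] * Ω ![J v, b p, b q]
      = ∑ p : Fin 6, ∑ q : Fin 6, η ![J u, J (b p), J (b q)] * Ω ![J v, J (b p), J (b q)] := by
    have := dsum b b' (bil η (J u)) (bil Ω (J v))
    simpa [hb'] using this
  -- Step 2: pointwise identity
  have key : ∀ p q : Fin 6, η ![J u, J (b p), J (b q)] * Ω ![J v, J (b p), J (b q)]
      = -(η ![J u, b p, b q] * Ω ![J v, b p, b q])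
        - η ![u, J (b p), b q] * Ω ![J v, b p, b q]
        - η ![u, b p, J (b q)] * Ω ![J v, b p, b q] := by
    intro p q
    have hΩ' : Ω ![J v, J (b p), J (b q)] = -Ω ![J v, b p, b q] := by
      have := hΩ (J v) (b p) (b q); linarith
    have hη' : η ![J u, J (b p), J (b q)]
        = η ![J u, b p, b q] + η ![u, J (b p), b q] + η ![u, b p, J (b q)] := by
      have h := hη (J u) (b p) (b q)
      rw [hJ2 u, neg0, neg0] at h
      linarith
    rw [hΩ', hη']; ring
  have h2 : ∑ p : Fin 6, ∑ q : Fin 6, η ![J u, J (b p), J (b q)] * Ω ![J v, J (b p), J (b q)]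
      = -(∑ p : Fin 6, ∑ q : Fin 6, η ![J u, b p, b q] * Ω ![J v, b p, b q])
        - (∑ p : Fin 6, ∑ q : Fin 6, η ![u, J (b p), b q] * Ω ![J v, b p, b q])
        - (∑ p : Fin 6, ∑ q : Fin 6, η ![u, b p, J (b q)] * Ω ![J v, b p, b q]) := by
    simp only [key, Finset.sum_sub_distrib, Finset.sum_neg_distrib]
  -- Step 3: the two cross terms agree
  have h3 : ∑ p : Fin 6, ∑ q : Fin 6, η ![u, b p, J (b q)] * Ω ![J v, b p, b q]
      = ∑ p : Fin 6, ∑ q : Fin 6, η ![u, J (b p), b q] * Ω ![J v, b p, b q] := by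
    rw [Finset.sum_comm]
    refine Finset.sum_congr rfl fun p _ => Finset.sum_congr rfl fun q _ => ?_
    rw [swap23 η u (J (b p)) (b q), swap23 Ω (J v) (b p) (b q)]
    ring
  -- Step 4: the cross term equals the original sum
  have hm : ∀ p q : Fin 6, Ω ![J v, b p, b q] = Ω ![v, J (b p), b q] := by
    intro p q
    have a1 : Ω ![v, J (b p), b q] = -Ω ![J (b p), v, b q] := swap12 Ω (J (b p)) v (b q)
    have a2 : Ω ![J (b p), v, b q] = -Ω ![J (b p), J v, J (b q)] := hΩ _ _ _
    have a3 : Ω ![J v, J (b p), J (b q)] = -Ω ![J (b p), J v, J (b q)] :=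
      swap12 Ω (J (b p)) (J v) (J (b q))
    have a4 : Ω ![J v, b p, b q] = -Ω ![J v, J (b p), J (b q)] := hΩ _ _ _
    linarith
  have h4 : ∑ p : Fin 6, ∑ q : Fin 6, η ![u, J (b p), b q] * Ω ![J v, b p, b q]
      = ∑ p : Fin 6, ∑ q : Fin 6, η ![u, b p, b q] * Ω ![v, b p, b q] := by
    calc ∑ p : Fin 6, ∑ q : Fin 6, η ![u, J (b p), b q] * Ω ![J v, b p, b q]
        = ∑ p : Fin 6, ∑ q : Fin 6, η ![u, J (b p), b q] * Ω ![v, J (b p), b q] := by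
          exact Finset.sum_congr rfl fun p _ => Finset.sum_congr rfl fun q _ => by rw [hm]
      _ = ∑ q : Fin 6, ∑ p : Fin 6, η ![u, J (b p), b q] * Ω ![v, J (b p), b q] :=
          Finset.sum_comm
      _ = ∑ q : Fin 6, ∑ p : Fin 6, η ![u, b p, b q] * Ω ![v, b p, b q] := by
          refine Finset.sum_congr rfl fun q _ => ?_
          have := sum_eq b b' (((bil η u).flip (b q)).comp J) (((bil Ω v).flip (b q)).comp J)
          simp only [LinearMap.coe_comp, Function.comp_apply, LinearMap.flip_apply,
            bil_apply, hb', hJ2] at this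
          rw [this]
          refine Finset.sum_congr rfl fun p _ => ?_
          rw [neg1 η, neg1 Ω]
          ring
      _ = ∑ p : Fin 6, ∑ q : Fin 6, η ![u, b p, b q] * Ω ![v, b p, b q] := Finset.sum_comm
  linarith [h1, h2, h3, h4]
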